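/- In A = ℝ[X,Y]/(X²+Y²−1), let I be the ideal generated by 1+x and y. Then I² is the principal ideal generated by 1+x. -/

import Mathlib

/-!
With `a = 1 + x`, the relation `x² + y² = 1` reads `y² = a (1 - x)`, so the generators `a²`, `a y`,
`y²` of `(a, y)²` are multiples of `a`; conversely `a² + y² = 2a`, so `a ∈ (a, y)²` once `2` is a unit.
-/

open MvPolynomial

noncomputable abbrev circleRingR : Type :=
  MvPolynomial (Fin 2) ℝ ⧸
    Ideal.span {(X 0 : MvPolynomial (Fin 2) ℝ) ^ 2 + X 1 ^ 2 - 1}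

noncomputable abbrev xClass : circleRingR := Ideal.Quotient.mk _ (X 0)

noncomputable abbrev yClass : circleRingR := Ideal.Quotient.mk _ (X 1)

theorem Ideal.span_pair_sq_eq_span_one_add_of_sq_add_sq_eq_one {R : Type*} [CommRing R]
    {x y : R} (h2 : IsUnit (2 : R)) (h : x ^ 2 + y ^ 2 = 1) :
    span {1 + x, y} ^ 2 = span {1 + x} := by
  apply le_antisymm
  · have hy : y * y = (1 + x) * (1 - x) := by linear_combination h
    rw [sq, span_pair_mul_span_pair, span_le]
    simp only [Set.insert_subset_iff, Set.singleton_subset_iff, SetLike.mem_coe,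
      mem_span_singleton]
    exact ⟨dvd_mul_right _ _, dvd_mul_right _ _, dvd_mul_left _ _, hy ▸ dvd_mul_right _ _⟩
  · have hsum : (1 + x) ^ 2 + y ^ 2 ∈ span {1 + x, y} ^ 2 :=
      add_mem (pow_mem_pow (subset_span (by simp)) 2) (pow_mem_pow (subset_span (by simp)) 2)
    rw [show (1 + x) ^ 2 + y ^ 2 = 2 * (1 + x) by linear_combination h,
      unit_mul_mem_iff_mem _ h2] at hsum
    exact (span_singleton_le_iff_mem _).mpr hsum

theorem xClass_sq_add_yClass_sq : xClass ^ 2 + yClass ^ 2 = 1 := by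
  rw [← sub_eq_zero]
  exact Ideal.Quotient.eq_zero_iff_mem.mpr (Ideal.subset_span rfl)

theorem circleRingR_isUnit_two : IsUnit (2 : circleRingR) := by
  rw [← map_ofNat (algebraMap ℝ circleRingR) 2]
  exact (two_ne_zero (α := ℝ)).isUnit.map _

theorem stmt_6 :
    (Ideal.span {1 + xClass, yClass}) ^ 2 = Ideal.span {1 + xClass} :=
  Ideal.span_pair_sq_eq_span_one_add_of_sq_add_sq_eq_one circleRingR_isUnit_two
    xClass_sq_add_yClass_sq
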